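/- Let c₀, c₁ > 0. There exist constants M ≥ 1 and μ > 0 such that every twice continuously differentiable function v : [0,1] × [0,∞) → ℝ satisfying v_tt(x,t) = v_xx(x,t) on (0,1) × (0,∞), v_x(0,t) = c₀·v(0,t), and v_x(1,t) = −c₁·v_t(1,t) for all t ≥ 0 obeys E(t) ≤ M·e^{−μt}·E(0) for all t ≥ 0, where E(t) = (1/2)∫₀¹ [v_x(x,t)² + v_t(x,t)²] dx + (c₀/2)·v(0,t)². -/

import Mathlib

/- STATEMENT 6: exponential stability of the target system: there are M ≥ 1, μ > 0
(depending only on c₀, c₁) such that every classical (C²) solution of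
v_tt = v_xx on (0,1)×(0,∞), v_x(0,t) = c₀ v(0,t), v_x(1,t) = −c₁ v_t(1,t) satisfies
E(t) ≤ M e^{−μt} E(0) for all t ≥ 0, where
E(t) = (1/2)∫₀¹ [v_x² + v_t²] dx + (c₀/2) v(0,t)². -/

open Set

noncomputable def targetEnergy (c₀ : ℝ) (v : ℝ → ℝ → ℝ) (t : ℝ) : ℝ :=
  (1/2) * (∫ x in (0:ℝ)..1,
      ((deriv (fun y => v y t) x) ^ 2 + (deriv (v x) t) ^ 2))
    + (c₀ / 2) * (v 0 t) ^ 2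

open Function


section infra

variable {v : ℝ → ℝ → ℝ}

/-- first partial derivative in x -/
noncomputable def pdx (v : ℝ → ℝ → ℝ) (p : ℝ × ℝ) : ℝ :=
  fderiv ℝ (Function.uncurry v) p (1, 0)

/-- first partial derivative in t -/
noncomputable def pdt (v : ℝ → ℝ → ℝ) (p : ℝ × ℝ) : ℝ :=
  fderiv ℝ (Function.uncurry v) p (0, 1)

/-- second derivative applied to vectors w then z -/
noncomputable def pdd (v : ℝ → ℝ → ℝ) (w z : ℝ × ℝ) (p : ℝ × ℝ) : ℝ :=
  fderiv ℝ (fderiv ℝ (Function.uncurry v)) p w z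

lemma line_hasDerivAt_x {g : ℝ × ℝ → ℝ} {x t : ℝ} (hg : DifferentiableAt ℝ g (x, t)) :
    HasDerivAt (fun y => g (y, t)) (fderiv ℝ g (x, t) (1, 0)) x := by
  have h : HasDerivAt (fun y : ℝ => (y, t)) ((1 : ℝ), (0 : ℝ)) x :=
    (hasDerivAt_id x).prodMk (hasDerivAt_const x t)
  exact hg.hasFDerivAt.comp_hasDerivAt x h

lemma line_hasDerivAt_t {g : ℝ × ℝ → ℝ} {x t : ℝ} (hg : DifferentiableAt ℝ g (x, t)) :
    HasDerivAt (fun s => g (x, s)) (fderiv ℝ g (x, t) (0, 1)) t := by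
  have h : HasDerivAt (fun s : ℝ => (x, s)) ((0 : ℝ), (1 : ℝ)) t :=
    (hasDerivAt_const t x).prodMk (hasDerivAt_id t)
  exact hg.hasFDerivAt.comp_hasDerivAt t h

variable (hv : ContDiff ℝ 2 (Function.uncurry v))
include hv

lemma hv_diff : Differentiable ℝ (Function.uncurry v) :=
  hv.differentiable (by norm_num)

lemma hv_fd : ContDiff ℝ 1 (fderiv ℝ (Function.uncurry v)) :=
  hv.fderiv_right (by norm_num)

lemma hv_fd_diff : Differentiable ℝ (fderiv ℝ (Function.uncurry v)) :=
  (hv_fd hv).differentiable (by norm_num)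

lemma pdx_hasDerivAt (x t : ℝ) : HasDerivAt (fun y => v y t) (pdx v (x, t)) x :=
  line_hasDerivAt_x ((hv_diff hv) (x, t))

lemma pdt_hasDerivAt (x t : ℝ) : HasDerivAt (v x) (pdt v (x, t)) t :=
  line_hasDerivAt_t ((hv_diff hv) (x, t))

lemma pdx_eq_deriv (x t : ℝ) : deriv (fun y => v y t) x = pdx v (x, t) :=
  (pdx_hasDerivAt hv x t).deriv

lemma pdt_eq_deriv (x t : ℝ) : deriv (v x) t = pdt v (x, t) :=
  (pdt_hasDerivAt hv x t).deriv

lemma pdx_continuous : Continuous (pdx v) :=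
  ((ContinuousLinearMap.apply ℝ ℝ ((1 : ℝ), (0 : ℝ))).continuous).comp (hv_fd hv).continuous

lemma pdt_continuous : Continuous (pdt v) :=
  ((ContinuousLinearMap.apply ℝ ℝ ((0 : ℝ), (1 : ℝ))).continuous).comp (hv_fd hv).continuous

lemma pdd_continuous (w z : ℝ × ℝ) : Continuous (pdd v w z) := by
  have h2 : Continuous (fderiv ℝ (fderiv ℝ (Function.uncurry v))) :=
    ((hv_fd hv).fderiv_right (m := 0) (by norm_num)).continuous
  exact (ContinuousLinearMap.apply ℝ ℝ z).continuous.comp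
    ((ContinuousLinearMap.apply ℝ ((ℝ × ℝ) →L[ℝ] ℝ) w).continuous.comp h2)


lemma pdx_hasFDerivAt (p : ℝ × ℝ) :
    HasFDerivAt (pdx v)
      ((ContinuousLinearMap.apply ℝ ℝ ((1 : ℝ), (0 : ℝ))).comp
        (fderiv ℝ (fderiv ℝ (Function.uncurry v)) p)) p :=
  (ContinuousLinearMap.apply ℝ ℝ ((1 : ℝ), (0 : ℝ))).hasFDerivAt.comp p
    ((hv_fd_diff hv) p).hasFDerivAt

lemma pdt_hasFDerivAt (p : ℝ × ℝ) :
    HasFDerivAt (pdt v)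
      ((ContinuousLinearMap.apply ℝ ℝ ((0 : ℝ), (1 : ℝ))).comp
        (fderiv ℝ (fderiv ℝ (Function.uncurry v)) p)) p :=
  (ContinuousLinearMap.apply ℝ ℝ ((0 : ℝ), (1 : ℝ))).hasFDerivAt.comp p
    ((hv_fd_diff hv) p).hasFDerivAt

lemma pdx_line_x (x t : ℝ) :
    HasDerivAt (fun y => pdx v (y, t)) (pdd v (1, 0) (1, 0) (x, t)) x := by
  have h : HasDerivAt (fun y : ℝ => (y, t)) ((1 : ℝ), (0 : ℝ)) x :=
    (hasDerivAt_id x).prodMk (hasDerivAt_const x t)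
  exact (pdx_hasFDerivAt hv (x, t)).comp_hasDerivAt x h

lemma pdx_line_t (x t : ℝ) :
    HasDerivAt (fun s => pdx v (x, s)) (pdd v (0, 1) (1, 0) (x, t)) t := by
  have h : HasDerivAt (fun s : ℝ => (x, s)) ((0 : ℝ), (1 : ℝ)) t :=
    (hasDerivAt_const t x).prodMk (hasDerivAt_id t)
  exact (pdx_hasFDerivAt hv (x, t)).comp_hasDerivAt t h

lemma pdt_line_x (x t : ℝ) :
    HasDerivAt (fun y => pdt v (y, t)) (pdd v (1, 0) (0, 1) (x, t)) x := by
  have h : HasDerivAt (fun y : ℝ => (y, t)) ((1 : ℝ), (0 : ℝ)) x :=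
    (hasDerivAt_id x).prodMk (hasDerivAt_const x t)
  exact (pdt_hasFDerivAt hv (x, t)).comp_hasDerivAt x h

lemma pdt_line_t (x t : ℝ) :
    HasDerivAt (fun s => pdt v (x, s)) (pdd v (0, 1) (0, 1) (x, t)) t := by
  have h : HasDerivAt (fun s : ℝ => (x, s)) ((0 : ℝ), (1 : ℝ)) t :=
    (hasDerivAt_const t x).prodMk (hasDerivAt_id t)
  exact (pdt_hasFDerivAt hv (x, t)).comp_hasDerivAt t h

lemma pdd_symm (w z : ℝ × ℝ) (p : ℝ × ℝ) : pdd v w z p = pdd v z w p :=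
  second_derivative_symmetric (fun y => ((hv_diff hv) y).hasFDerivAt)
    ((hv_fd_diff hv) p).hasFDerivAt w z

lemma wave_pdd
    (hw : ∀ x ∈ Ioo (0:ℝ) 1, ∀ t ∈ Ioi (0:ℝ),
      deriv (deriv (v x)) t = deriv (deriv (fun y => v y t)) x)
    {x t : ℝ} (hx : x ∈ Ioo (0:ℝ) 1) (ht : t ∈ Ioi (0:ℝ)) :
    pdd v (0, 1) (0, 1) (x, t) = pdd v (1, 0) (1, 0) (x, t) := by
  have h1 : deriv (v x) = fun s => pdt v (x, s) := funext fun s => pdt_eq_deriv hv x s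
  have h2 : deriv (fun y => v y t) = fun y => pdx v (y, t) :=
    funext fun y => pdx_eq_deriv hv y t
  have := hw x hx t ht
  rw [h1, h2, (pdt_line_t hv x t).deriv, (pdx_line_x hv x t).deriv] at this
  exact this

end infra

section lyap

noncomputable def fI (v : ℝ → ℝ → ℝ) (δ x t : ℝ) : ℝ :=
  (1/2) * ((pdx v (x, t))^2 + (pdt v (x, t))^2)
    + δ * (1 + x) * (pdx v (x, t)) * (pdt v (x, t))

noncomputable def fIT (v : ℝ → ℝ → ℝ) (δ x t : ℝ) : ℝ :=
  pdx v (x, t) * pdd v (0, 1) (1, 0) (x, t)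
    + pdt v (x, t) * pdd v (0, 1) (0, 1) (x, t)
    + δ * (1 + x) * (pdd v (0, 1) (1, 0) (x, t) * pdt v (x, t)
        + pdx v (x, t) * pdd v (0, 1) (0, 1) (x, t))

noncomputable def gB (v : ℝ → ℝ → ℝ) (δ x t : ℝ) : ℝ :=
  pdx v (x, t) * pdt v (x, t)
    + δ * (1 + x) * (1/2) * ((pdt v (x, t))^2 + (pdx v (x, t))^2)

noncomputable def gBX (v : ℝ → ℝ → ℝ) (δ x t : ℝ) : ℝ :=
  pdd v (1, 0) (1, 0) (x, t) * pdt v (x, t)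
    + pdx v (x, t) * pdd v (1, 0) (0, 1) (x, t)
    + δ * (1/2) * ((pdt v (x, t))^2 + (pdx v (x, t))^2)
    + δ * (1 + x) * (pdt v (x, t) * pdd v (1, 0) (0, 1) (x, t)
        + pdx v (x, t) * pdd v (1, 0) (1, 0) (x, t))

variable {v : ℝ → ℝ → ℝ} {δ : ℝ}

lemma fI_hasDerivAt_t (hv : ContDiff ℝ 2 (Function.uncurry v)) (x t : ℝ) :
    HasDerivAt (fun s => fI v δ x s) (fIT v δ x t) t := by
  have ha := pdx_line_t hv x t
  have hb := pdt_line_t hv x t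
  have h : HasDerivAt (fun s => (1/2 : ℝ) * ((pdx v (x, s))^2 + (pdt v (x, s))^2)
      + δ * (1 + x) * (pdx v (x, s)) * (pdt v (x, s)))
      ((1/2) * (2 * pdx v (x, t) ^ 1 * pdd v (0, 1) (1, 0) (x, t)
          + 2 * pdt v (x, t) ^ 1 * pdd v (0, 1) (0, 1) (x, t))
        + ((δ * (1 + x)) * pdd v (0, 1) (1, 0) (x, t) * pdt v (x, t)
          + (δ * (1 + x)) * pdx v (x, t) * pdd v (0, 1) (0, 1) (x, t))) t := by
    have h1 := ((ha.pow 2).add (hb.pow 2)).const_mul (1/2 : ℝ)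
    have h2 := (ha.const_mul (δ * (1 + x))).mul hb
    have := h1.add h2
    exact this.congr_deriv (by norm_num <;> ring)
  refine h.congr_deriv ?_
  unfold fIT; ring

lemma gB_hasDerivAt_x (hv : ContDiff ℝ 2 (Function.uncurry v)) (x t : ℝ) :
    HasDerivAt (fun y => gB v δ y t) (gBX v δ x t) x := by
  have ha := pdx_line_x hv x t
  have hb := pdt_line_x hv x t
  have hc : HasDerivAt (fun y : ℝ => δ * (1 + y) * (1/2 : ℝ)) (δ * (1/2)) x := by
    have : HasDerivAt (fun y : ℝ => δ * (1 + y) * (1/2 : ℝ)) (δ * 1 * (1/2)) x := by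
      have h0 : HasDerivAt (fun y : ℝ => 1 + y) 1 x := by
        simpa using (hasDerivAt_id x).const_add (1 : ℝ)
      exact (h0.const_mul δ).mul_const (1/2 : ℝ)
    simpa using this
  have h1 := ha.mul hb
  have h2 := hc.mul ((hb.pow 2).add (ha.pow 2))
  have h := h1.add h2
  refine h.congr_deriv ?_
  unfold gBX; simp only [Pi.add_apply, Pi.pow_apply]; push_cast; ring

lemma fIT_eq_gBX (hv : ContDiff ℝ 2 (Function.uncurry v))
    (hw : ∀ x ∈ Ioo (0:ℝ) 1, ∀ t ∈ Ioi (0:ℝ),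
      deriv (deriv (v x)) t = deriv (deriv (fun y => v y t)) x)
    {x t : ℝ} (hx : x ∈ Ioo (0:ℝ) 1) (ht : t ∈ Ioi (0:ℝ)) :
    fIT v δ x t = gBX v δ x t
      - δ * (1/2) * ((pdx v (x, t))^2 + (pdt v (x, t))^2) := by
  unfold fIT gBX
  rw [pdd_symm hv (0,1) (1,0) (x,t), wave_pdd hv hw hx ht]
  ring

lemma pdx2 (hv : ContDiff ℝ 2 (Function.uncurry v)) :
    Continuous fun p : ℝ × ℝ => pdx v p := pdx_continuous hv

lemma fI_cont (hv : ContDiff ℝ 2 (Function.uncurry v)) :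
    Continuous fun p : ℝ × ℝ => fI v δ p.1 p.2 := by
  have h1 := pdx_continuous hv
  have h2 := pdt_continuous hv
  unfold fI; fun_prop

lemma fIT_cont (hv : ContDiff ℝ 2 (Function.uncurry v)) :
    Continuous fun p : ℝ × ℝ => fIT v δ p.1 p.2 := by
  have h1 := pdx_continuous hv
  have h2 := pdt_continuous hv
  have h3 := pdd_continuous hv (0,1) (1,0)
  have h4 := pdd_continuous hv (0,1) (0,1)
  unfold fIT; fun_prop

lemma gBX_cont (hv : ContDiff ℝ 2 (Function.uncurry v)) :
    Continuous fun p : ℝ × ℝ => gBX v δ p.1 p.2 := by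
  have h1 := pdx_continuous hv
  have h2 := pdt_continuous hv
  have h3 := pdd_continuous hv (1,0) (1,0)
  have h4 := pdd_continuous hv (1,0) (0,1)
  unfold gBX; fun_prop

end lyap

section derivstep

variable {v : ℝ → ℝ → ℝ} {δ : ℝ}

noncomputable def Ien (v : ℝ → ℝ → ℝ) (t : ℝ) : ℝ :=
  ∫ x in (0:ℝ)..1, ((pdx v (x, t))^2 + (pdt v (x, t))^2)

lemma Fly_hasDerivAt (hv : ContDiff ℝ 2 (Function.uncurry v)) (t₀ : ℝ) :
    HasDerivAt (fun t => ∫ x in (0:ℝ)..1, fI v δ x t)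
      (∫ x in (0:ℝ)..1, fIT v δ x t₀) t₀ := by
  have hK : IsCompact (Icc (0:ℝ) 1 ×ˢ Icc (t₀ - 1) (t₀ + 1)) :=
    isCompact_Icc.prod isCompact_Icc
  obtain ⟨C, hC⟩ := hK.exists_bound_of_continuousOn (fIT_cont (δ := δ) hv).continuousOn
  have key := intervalIntegral.hasDerivAt_integral_of_dominated_loc_of_deriv_le
    (F := fun t x => fI v δ x t) (F' := fun t x => fIT v δ x t) (x₀ := t₀)
    (a := (0:ℝ)) (b := 1) (bound := fun _ => C) (μ := MeasureTheory.volume)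
    (Metric.ball_mem_nhds t₀ one_pos)
    ?_ ?_ ?_ ?_ ?_ ?_
  · exact key.2
  · filter_upwards with t
    exact (((fI_cont (δ := δ) hv).comp (continuous_id.prodMk continuous_const)) :
      Continuous fun x => fI v δ x t).aestronglyMeasurable
  · exact (((fI_cont (δ := δ) hv).comp
      (continuous_id.prodMk continuous_const)) :
        Continuous fun x => fI v δ x t₀).intervalIntegrable 0 1
  · exact (((fIT_cont (δ := δ) hv).comp (continuous_id.prodMk continuous_const)) :
      Continuous fun x => fIT v δ x t₀).aestronglyMeasurable
  · filter_upwards with x hx t ht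
    have hx' : x ∈ Icc (0:ℝ) 1 := by
      rw [uIoc_of_le (by norm_num : (0:ℝ) ≤ 1)] at hx
      exact Ioc_subset_Icc_self hx
    have ht' : t ∈ Icc (t₀ - 1) (t₀ + 1) := by
      rw [Metric.mem_ball, Real.dist_eq] at ht
      constructor <;> [linarith [abs_lt.mp ht]; linarith [abs_lt.mp ht]]
    exact hC (x, t) ⟨hx', ht'⟩
  · exact intervalIntegrable_const
  · filter_upwards with x hx t ht
    exact fI_hasDerivAt_t hv x t

lemma integral_fIT_eq (hv : ContDiff ℝ 2 (Function.uncurry v))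
    (hw : ∀ x ∈ Ioo (0:ℝ) 1, ∀ t ∈ Ioi (0:ℝ),
      deriv (deriv (v x)) t = deriv (deriv (fun y => v y t)) x)
    {t₀ : ℝ} (ht₀ : 0 < t₀) :
    ∫ x in (0:ℝ)..1, fIT v δ x t₀
      = gB v δ 1 t₀ - gB v δ 0 t₀ - δ * (1/2) * Ien v t₀ := by
  have hae : ∀ᵐ x : ℝ ∂MeasureTheory.volume, x ≠ 1 := by
    refine MeasureTheory.ae_iff.mpr ?_
    have : {x : ℝ | ¬ x ≠ 1} = {1} := by ext y; simp
    rw [this]; exact Real.volume_singleton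
  have h1 : ∫ x in (0:ℝ)..1, fIT v δ x t₀
      = ∫ x in (0:ℝ)..1,
          (gBX v δ x t₀ - δ * (1/2) * ((pdx v (x, t₀))^2 + (pdt v (x, t₀))^2)) := by
    refine intervalIntegral.integral_congr_ae ?_
    filter_upwards [hae] with x hx1 hxI
    rw [uIoc_of_le (by norm_num : (0:ℝ) ≤ 1)] at hxI
    have hxo : x ∈ Ioo (0:ℝ) 1 := ⟨hxI.1, lt_of_le_of_ne hxI.2 hx1⟩
    exact fIT_eq_gBX hv hw hxo ht₀
  have cgBX : Continuous fun x => gBX v δ x t₀ :=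
    (gBX_cont (δ := δ) hv).comp (continuous_id.prodMk continuous_const)
  have cI : Continuous fun x : ℝ => (pdx v (x, t₀))^2 + (pdt v (x, t₀))^2 := by
    have h1 := pdx_continuous hv
    have h2 := pdt_continuous hv
    fun_prop
  have h2 : ∫ x in (0:ℝ)..1, gBX v δ x t₀ = gB v δ 1 t₀ - gB v δ 0 t₀ :=
    intervalIntegral.integral_eq_sub_of_hasDerivAt
      (fun x _ => gB_hasDerivAt_x hv x t₀) (cgBX.intervalIntegrable 0 1)
  rw [h1, intervalIntegral.integral_sub (cgBX.intervalIntegrable 0 1)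
    (((continuous_const.fun_mul cI)).intervalIntegrable 0 1), h2,
    intervalIntegral.integral_const_mul]
  rfl

end derivstep


set_option maxHeartbeats 1000000 in
theorem target_system_exponential_stability' (c₀ c₁ : ℝ) (hc₀ : 0 < c₀) (hc₁ : 0 < c₁) :
    ∃ M ≥ (1:ℝ), ∃ μ > (0:ℝ), ∀ v : ℝ → ℝ → ℝ,
      ContDiff ℝ 2 (Function.uncurry v) →
      (∀ x ∈ Ioo (0:ℝ) 1, ∀ t ∈ Ioi (0:ℝ),
        deriv (deriv (v x)) t = deriv (deriv (fun y => v y t)) x) →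
      (∀ t ∈ Ici (0:ℝ), deriv (fun y => v y t) 0 = c₀ * v 0 t) →
      (∀ t ∈ Ici (0:ℝ), deriv (fun y => v y t) 1 = -c₁ * deriv (v 1) t) →
      ∀ t ∈ Ici (0:ℝ),
        targetEnergy c₀ v t ≤ M * Real.exp (-μ * t) * targetEnergy c₀ v 0 := by
  set δ : ℝ := min (c₁ / (1 + c₁^2)) (1/4) with hδdef
  have hδ0 : 0 < δ := lt_min (by positivity) (by norm_num)
  have hδ4 : δ ≤ 1/4 := min_le_right _ _
  have hδc : δ * (1 + c₁^2) ≤ c₁ := by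
    have h := min_le_left (c₁ / (1 + c₁^2)) (1/4)
    have hpos : (0:ℝ) < 1 + c₁^2 := by positivity
    calc δ * (1 + c₁^2) ≤ (c₁ / (1 + c₁^2)) * (1 + c₁^2) := by
          exact mul_le_mul_of_nonneg_right h hpos.le
      _ = c₁ := by field_simp
  set m : ℝ := min 1 c₀ with hmdef
  have hm0 : 0 < m := lt_min one_pos hc₀
  have hm1 : m ≤ 1 := min_le_left _ _
  have hmc : m ≤ c₀ := min_le_right _ _
  set μ : ℝ := 2 * (δ * m) / 3 with hμdef
  have hμ0 : 0 < μ := by positivity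
  refine ⟨3, by norm_num, μ, hμ0, ?_⟩
  intro v hv hw hb0 hb1 t ht
  -- notation
  set Fl : ℝ → ℝ := fun s => ∫ x in (0:ℝ)..1, fI v δ x s with hFldef
  set B : ℝ → ℝ := fun s => (c₀/2) * (v 0 s)^2 with hBdef
  set Vl : ℝ → ℝ := fun s => Fl s + B s with hVldef
  -- energy rewrite
  have hE : ∀ s, targetEnergy c₀ v s = (1/2) * Ien v s + (c₀/2) * (v 0 s)^2 := by
    intro s
    unfold targetEnergy Ien
    simp only [pdx_eq_deriv hv, pdt_eq_deriv hv]
  -- boundary conditions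
  have hbx0 : ∀ s, 0 ≤ s → pdx v (0, s) = c₀ * v 0 s := fun s hs => by
    rw [← pdx_eq_deriv hv]; exact hb0 s hs
  have hbx1 : ∀ s, 0 ≤ s → pdx v (1, s) = -c₁ * pdt v (1, s) := fun s hs => by
    rw [← pdx_eq_deriv hv, ← pdt_eq_deriv hv]; exact hb1 s hs
  -- nonnegativity
  have hIen0 : ∀ s, 0 ≤ Ien v s := fun s =>
    intervalIntegral.integral_nonneg (by norm_num) (fun x _ => by positivity)
  have hB0 : ∀ s, 0 ≤ B s := fun s => by simp only [hBdef]; positivity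
  -- comparison between Fl and Ien
  have hIen_cont : ∀ s, Continuous fun x : ℝ => (pdx v (x, s))^2 + (pdt v (x, s))^2 := by
    intro s
    have h1 := pdx_continuous hv
    have h2 := pdt_continuous hv
    fun_prop
  have hfI_cont : ∀ s, Continuous fun x : ℝ => fI v δ x s := fun s =>
    (fI_cont (δ := δ) hv).comp (continuous_id.prodMk continuous_const)
  have hptwise : ∀ x ∈ Icc (0:ℝ) 1, ∀ s : ℝ,
      (1/4) * ((pdx v (x, s))^2 + (pdt v (x, s))^2) ≤ fI v δ x s ∧
      fI v δ x s ≤ (3/4) * ((pdx v (x, s))^2 + (pdt v (x, s))^2) := by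
    intro x hx s
    set a := pdx v (x, s)
    set b := pdt v (x, s)
    have h1 : δ * (1 + x) ≤ 1/2 := by nlinarith [hx.2]
    have h2 : 0 ≤ δ * (1 + x) := by nlinarith [hx.1]
    have hsum := sq_nonneg (a + b)
    have hdiff := sq_nonneg (a - b)
    unfold fI
    constructor
    · rcases le_or_gt 0 (a * b) with hab | hab
      · nlinarith
      · nlinarith [mul_le_mul_of_nonpos_right h1 hab.le]
    · rcases le_or_gt 0 (a * b) with hab | hab
      · nlinarith [mul_le_mul_of_nonneg_right h1 hab]
      · nlinarith
  have hFlow : ∀ s, (1/4) * Ien v s ≤ Fl s := by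
    intro s
    have := intervalIntegral.integral_mono_on (by norm_num : (0:ℝ) ≤ 1)
      ((continuous_const.mul (hIen_cont s)).intervalIntegrable (μ := MeasureTheory.volume) 0 1)
      ((hfI_cont s).intervalIntegrable (μ := MeasureTheory.volume) 0 1)
      (fun x hx => (hptwise x hx s).1)
    simpa [Ien, intervalIntegral.integral_const_mul] using this
  have hFhigh : ∀ s, Fl s ≤ (3/4) * Ien v s := by
    intro s
    have := intervalIntegral.integral_mono_on (by norm_num : (0:ℝ) ≤ 1)
      ((hfI_cont s).intervalIntegrable (μ := MeasureTheory.volume) 0 1)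
      ((continuous_const.mul (hIen_cont s)).intervalIntegrable (μ := MeasureTheory.volume) 0 1)
      (fun x hx => (hptwise x hx s).2)
    simpa [Ien, intervalIntegral.integral_const_mul] using this
  have hE2V : ∀ s, targetEnergy c₀ v s ≤ 2 * Vl s := by
    intro s
    rw [hE s]
    have := hFlow s; have := hB0 s
    simp only [hVldef, hBdef]
    nlinarith
  have hV32 : ∀ s, Vl s ≤ (3/2) * targetEnergy c₀ v s := by
    intro s
    rw [hE s]
    have := hFhigh s; have := hB0 s
    simp only [hVldef, hBdef]
    nlinarith
  -- derivative of B
  have hBder : ∀ s, HasDerivAt B (c₀ * v 0 s * pdt v (0, s)) s := by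
    intro s
    have h := ((pdt_hasDerivAt hv 0 s).pow 2).const_mul (c₀/2)
    refine h.congr_deriv ?_
    push_cast; ring
  -- derivative of Vl
  have hVder : ∀ s, 0 < s → HasDerivAt Vl
      ((gB v δ 1 s - gB v δ 0 s - δ * (1/2) * Ien v s) + c₀ * v 0 s * pdt v (0, s)) s := by
    intro s hs
    have h1 := (Fly_hasDerivAt (δ := δ) hv s).add (hBder s)
    rwa [integral_fIT_eq hv hw hs] at h1
  -- the key differential inequality
  have hkey : ∀ s, 0 < s →
      (gB v δ 1 s - gB v δ 0 s - δ * (1/2) * Ien v s) + c₀ * v 0 s * pdt v (0, s)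
        ≤ -μ * Vl s := by
    intro s hs
    have hg1 : gB v δ 1 s ≤ 0 := by
      unfold gB
      rw [hbx1 s hs.le]
      nlinarith [sq_nonneg (pdt v (1, s))]
    have hg0 : gB v δ 0 s
        = c₀ * v 0 s * pdt v (0, s)
          + δ * (1/2) * ((pdt v (0, s))^2 + c₀^2 * (v 0 s)^2) := by
      unfold gB
      rw [hbx0 s hs.le]
      ring
    have hEnn : δ * m * targetEnergy c₀ v s
        ≤ δ * (1/2) * Ien v s + δ * (1/2) * c₀^2 * (v 0 s)^2 := by
      rw [hE s]
      have h1 : δ * m * ((1/2) * Ien v s) ≤ δ * (1/2) * Ien v s := by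
        nlinarith [mul_nonneg (mul_nonneg hδ0.le (sub_nonneg.mpr hm1)) (hIen0 s)]
      have h2 : δ * m * ((c₀/2) * (v 0 s)^2) ≤ δ * (1/2) * c₀^2 * (v 0 s)^2 := by
        nlinarith [mul_nonneg (mul_nonneg (mul_nonneg hδ0.le hc₀.le) (sq_nonneg (v 0 s)))
          (sub_nonneg.mpr hmc)]
      linarith [h1, h2]
    have hμV : -μ * Vl s ≥ -(δ * m) * targetEnergy c₀ v s := by
      have := hV32 s
      simp only [hμdef]
      nlinarith
    have hsq : 0 ≤ δ * (1/2) * (pdt v (0, s))^2 :=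
      mul_nonneg (by positivity) (sq_nonneg _)
    have e2 : gB v δ 1 s
          - (c₀ * v 0 s * pdt v (0, s)
            + δ * (1/2) * ((pdt v (0, s))^2 + c₀^2 * (v 0 s)^2))
          - δ * (1/2) * Ien v s + c₀ * v 0 s * pdt v (0, s)
        = gB v δ 1 s - δ * (1/2) * (pdt v (0, s))^2
          - (δ * (1/2) * Ien v s + δ * (1/2) * c₀^2 * (v 0 s)^2) := by ring
    rw [hg0, e2]
    calc gB v δ 1 s - δ * (1/2) * (pdt v (0, s))^2
          - (δ * (1/2) * Ien v s + δ * (1/2) * c₀^2 * (v 0 s)^2)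
        ≤ -(δ * (1/2) * Ien v s + δ * (1/2) * c₀^2 * (v 0 s)^2) := by
          linarith only [hg1, hsq]
      _ ≤ -(δ * m * targetEnergy c₀ v s) := by linarith only [hEnn]
      _ = -(δ * m) * targetEnergy c₀ v s := by ring
      _ ≤ -μ * Vl s := hμV
  -- continuity of Vl
  have hVl_cont : Continuous Vl := by
    have hFc : Continuous Fl := by
      have : Continuous (Function.uncurry fun s x => fI v δ x s) :=
        (fI_cont (δ := δ) hv).comp continuous_swap
      exact intervalIntegral.continuous_parametric_intervalIntegral_of_continuous' this 0 1
    have hv0 : Continuous (v 0) := by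
      have := hv.continuous
      exact this.comp (continuous_const.prodMk continuous_id)
    simp only [hVldef, hBdef]
    fun_prop
  -- Gronwall via monotonicity
  set G : ℝ → ℝ := fun s => Vl s * Real.exp (μ * s) with hGdef
  have hGder : ∀ s, 0 < s → HasDerivAt G
      (((gB v δ 1 s - gB v δ 0 s - δ * (1/2) * Ien v s) + c₀ * v 0 s * pdt v (0, s))
          * Real.exp (μ * s) + Vl s * (μ * Real.exp (μ * s))) s := by
    intro s hs
    have he : HasDerivAt (fun r => Real.exp (μ * r)) (μ * Real.exp (μ * s)) s := by
      have := ((hasDerivAt_id s).const_mul μ).exp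
      simpa [mul_comm] using this
    exact (hVder s hs).mul he
  have hanti : AntitoneOn G (Ici (0:ℝ)) := by
    refine antitoneOn_of_deriv_nonpos (convex_Ici 0)
      (Continuous.continuousOn (by fun_prop)) ?_ ?_
    · intro s hs
      rw [interior_Ici] at hs
      exact ((hGder s hs).differentiableAt).differentiableWithinAt
    · intro s hs
      rw [interior_Ici] at hs
      rw [(hGder s hs).deriv]
      have h1 := hkey s hs
      have h2 := Real.exp_pos (μ * s)
      nlinarith
  have hmono : Vl t * Real.exp (μ * t) ≤ Vl 0 := by
    have := hanti (self_mem_Ici) ht ht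
    simpa [hGdef] using this
  -- conclusion
  have hexp : Real.exp (-μ * t) * Real.exp (μ * t) = 1 := by
    rw [← Real.exp_add]; ring_nf; exact Real.exp_zero
  have hVt : Vl t ≤ Real.exp (-μ * t) * Vl 0 := by
    have hep2 := (Real.exp_pos (-μ * t)).le
    calc Vl t = Real.exp (-μ * t) * Real.exp (μ * t) * Vl t := by rw [hexp]; ring
      _ = Real.exp (-μ * t) * (Vl t * Real.exp (μ * t)) := by ring
      _ ≤ Real.exp (-μ * t) * Vl 0 := mul_le_mul_of_nonneg_left hmono hep2
  have hfinal : targetEnergy c₀ v t ≤ 3 * Real.exp (-μ * t) * targetEnergy c₀ v 0 := by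
    have h1 := hE2V t
    have h2 := hV32 0
    have hep2 := (Real.exp_pos (-μ * t)).le
    have h3 := mul_le_mul_of_nonneg_left h2 hep2
    calc targetEnergy c₀ v t ≤ 2 * Vl t := h1
      _ ≤ 2 * (Real.exp (-μ * t) * Vl 0) := by linarith [hVt]
      _ ≤ 2 * (Real.exp (-μ * t) * (3/2 * targetEnergy c₀ v 0)) := by linarith [h3]
      _ = 3 * Real.exp (-μ * t) * targetEnergy c₀ v 0 := by ring
  exact hfinal

theorem target_system_exponential_stability (c₀ c₁ : ℝ) (hc₀ : 0 < c₀) (hc₁ : 0 < c₁) :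
    ∃ M ≥ (1:ℝ), ∃ μ > (0:ℝ), ∀ v : ℝ → ℝ → ℝ,
      ContDiff ℝ 2 (Function.uncurry v) →
      (∀ x ∈ Ioo (0:ℝ) 1, ∀ t ∈ Ioi (0:ℝ),
        deriv (deriv (v x)) t = deriv (deriv (fun y => v y t)) x) →
      (∀ t ∈ Ici (0:ℝ), deriv (fun y => v y t) 0 = c₀ * v 0 t) →
      (∀ t ∈ Ici (0:ℝ), deriv (fun y => v y t) 1 = -c₁ * deriv (v 1) t) →
      ∀ t ∈ Ici (0:ℝ),
        targetEnergy c₀ v t ≤ M * Real.exp (-μ * t) * targetEnergy c₀ v 0 :=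
  target_system_exponential_stability' c₀ c₁ hc₀ hc₁
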